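/- ANF compatibility with effect typing: if Γ ⊢' e : t / Σ ↦ Σ' in LFST-EFF, then Γ ⊢' ⟦e⟧_ANF : t / Σ ↦ Σ' in LFST-EFF, i.e. A-normalization preserves the effect-annotated type and the incoming/outgoing channel environments. -/

import Mathlib

set_option maxHeartbeats 1000000

namespace SessRel

/-! ## LFST types (including LFST-rec record types) -/

inductive LTy : Type
  | unit : LTy
  | endt : LTy
  | ap (s : LTy) : LTy
  | arr (t1 t2 : LTy) : LTy
  | lolli (t1 t2 : LTy) : LTy
  | prod (t1 t2 : LTy) : LTy
  | send (t s : LTy) : LTy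
  | recv (t s : LTy) : LTy
  | rcd (r : List (ℕ × LTy)) : LTy

/-- dual session type in LFST -/
def dualL : LTy → LTy
  | .send t s => .recv t (dualL s)
  | .recv t s => .send t (dualL s)
  | t => t

/-! ## LFST expressions -/

inductive Exp : Type
  | var (x : ℕ)
  | unit
  | lam (x : ℕ) (e : Exp)
  | app (e1 e2 : Exp)
  | pair (e1 e2 : Exp)
  | letp (x y : ℕ) (e1 e2 : Exp)      -- let (x,y) = e1 in e2
  | lete (x : ℕ) (e1 e2 : Exp)        -- let x = e1 in e2
  | send (e1 e2 : Exp)                -- send e1 e2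
  | recv (e : Exp)
  | accept (e : Exp)
  | request (e : Exp)
  | newc (s : LTy)
  | fork (e : Exp)
  | fixE (e : Exp)
  | chan (γ : ℕ) (pos : Bool)         -- runtime channel endpoint
  | apn (p : ℕ)                       -- access point name
  | rcd (fs : List (ℕ × Exp))         -- record literal (LFST-rec)
  | rconcat (e1 e2 : Exp)
  | rsplit (e : Exp) (α : ℕ)
  | rsplitmany (e : Exp) (αs : List ℕ)

def isValue : Exp → Bool
  | .var _ => true
  | .unit => true
  | .lam _ _ => true
  | .chan _ _ => true
  | .apn _ => true
  | .pair a b => isValue a && isValue b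
  | .rcd [] => true
  | .rcd ((_, e) :: fs) => isValue e && isValue (.rcd fs)
  | _ => false

mutual
def subst (v : Exp) (x : ℕ) : Exp → Exp
  | .var y => if y = x then v else .var y
  | .unit => .unit
  | .lam y e => if y = x then .lam y e else .lam y (subst v x e)
  | .app a b => .app (subst v x a) (subst v x b)
  | .pair a b => .pair (subst v x a) (subst v x b)
  | .letp y z a b => .letp y z (subst v x a) (if y = x ∨ z = x then b else subst v x b)
  | .lete y a b => .lete y (subst v x a) (if y = x then b else subst v x b)
  | .send a b => .send (subst v x a) (subst v x b)
  | .recv a => .recv (subst v x a)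
  | .accept a => .accept (subst v x a)
  | .request a => .request (subst v x a)
  | .newc s => .newc s
  | .fork e => .fork (subst v x e)
  | .fixE e => .fixE (subst v x e)
  | .chan g p => .chan g p
  | .apn p => .apn p
  | .rcd fs => .rcd (substL v x fs)
  | .rconcat a b => .rconcat (subst v x a) (subst v x b)
  | .rsplit a α => .rsplit (subst v x a) α
  | .rsplitmany a αs => .rsplitmany (subst v x a) αs

def substL (v : Exp) (x : ℕ) : List (ℕ × Exp) → List (ℕ × Exp)
  | [] => []
  | (α, e) :: fs => (α, subst v x e) :: substL v x fs
end

/-! ## A-normal form translation ⟦·⟧_ANF (within LFST) -/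

mutual
def anf : Exp → Exp
  | .var x => .var x
  | .unit => .unit
  | .lam x e => .lam x (anf e)
  | .app a b =>
      if isValue a then
        if isValue b then .app (anf a) (anf b)
        else .lete 1 (anf b) (.app (anf a) (.var 1))
      else
        if isValue b then .lete 0 (anf a) (.app (.var 0) (anf b))
        else .lete 0 (anf a) (.lete 1 (anf b) (.app (.var 0) (.var 1)))
  | .pair a b =>
      if isValue a then
        if isValue b then .pair (anf a) (anf b)
        else .lete 1 (anf b) (.pair (anf a) (.var 1))
      else
        if isValue b then .lete 0 (anf a) (.pair (.var 0) (anf b))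
        else .lete 0 (anf a) (.lete 1 (anf b) (.pair (.var 0) (.var 1)))
  | .letp x y a b =>
      if isValue a then .letp x y (anf a) (anf b)
      else .lete 2 (anf a) (.letp x y (.var 2) (anf b))
  | .lete x a b => .lete x (anf a) (anf b)
  | .send a b =>
      if isValue a then
        if isValue b then .send (anf a) (anf b)
        else .lete 1 (anf b) (.send (anf a) (.var 1))
      else
        if isValue b then .lete 0 (anf a) (.send (.var 0) (anf b))
        else .lete 0 (anf a) (.lete 1 (anf b) (.send (.var 0) (.var 1)))
  | .recv a => if isValue a then .recv (anf a) else .lete 1 (anf a) (.recv (.var 1))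
  | .accept a => if isValue a then .accept (anf a) else .lete 0 (anf a) (.accept (.var 0))
  | .request a => if isValue a then .request (anf a) else .lete 0 (anf a) (.request (.var 0))
  | .newc s => .newc s
  | .fork e => .lete 3 (.fork (anf e)) .unit     -- fork ⟦e⟧ ; ()
  | .fixE e => .fixE (anf e)
  | .chan g p => .chan g p
  | .apn p => .apn p
  | .rcd fs => .rcd (anfL fs)
  | .rconcat a b => .rconcat (anf a) (anf b)
  | .rsplit a α => .rsplit (anf a) α
  | .rsplitmany a αs => .rsplitmany (anf a) αs

def anfL : List (ℕ × Exp) → List (ℕ × Exp)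
  | [] => []
  | (α, e) :: fs => (α, anf e) :: anfL fs
end

/-! ## LFST evaluation contexts -/

inductive Ctx : Type
  | hole
  | appL (E : Ctx) (e : Exp)
  | appR (v : Exp) (E : Ctx)
  | pairL (E : Ctx) (e : Exp)
  | pairR (v : Exp) (E : Ctx)
  | letp (x y : ℕ) (E : Ctx) (e : Exp)
  | lete (x : ℕ) (E : Ctx) (e : Exp)
  | sendL (E : Ctx) (e : Exp)
  | sendR (v : Exp) (E : Ctx)
  | recv (E : Ctx)
  | accept (E : Ctx)
  | request (E : Ctx)

def fill : Ctx → Exp → Exp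
  | .hole, e => e
  | .appL E e2, e => .app (fill E e) e2
  | .appR v E, e => .app v (fill E e)
  | .pairL E e2, e => .pair (fill E e) e2
  | .pairR v E, e => .pair v (fill E e)
  | .letp x y E e2, e => .letp x y (fill E e) e2
  | .lete x E e2, e => .lete x (fill E e) e2
  | .sendL E e2, e => .send (fill E e) e2
  | .sendR v E, e => .send v (fill E e)
  | .recv E, e => .recv (fill E e)
  | .accept E, e => .accept (fill E e)
  | .request E, e => .request (fill E e)

/-- `E` is a genuine evaluation context: all left components are values. -/
def IsECtx : Ctx → Prop
  | .hole => True
  | .appL E _ => IsECtx E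
  | .appR v E => isValue v = true ∧ IsECtx E
  | .pairL E _ => IsECtx E
  | .pairR v E => isValue v = true ∧ IsECtx E
  | .letp _ _ E _ => IsECtx E
  | .lete _ E _ => IsECtx E
  | .sendL E _ => IsECtx E
  | .sendR v E => isValue v = true ∧ IsECtx E
  | .recv E => IsECtx E
  | .accept E => IsECtx E
  | .request E => IsECtx E

/-- A-normal form translation on evaluation contexts. -/
def anfC : Ctx → Ctx
  | .hole => .hole
  | .appL E e => .lete 0 (anfC E) (anf (.app (.var 0) e))
  | .appR v E => .lete 1 (anfC E) (.app (anf v) (.var 1))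
  | .pairL E e => .lete 0 (anfC E) (anf (.pair (.var 0) e))
  | .pairR v E => .lete 1 (anfC E) (.pair (anf v) (.var 1))
  | .letp x y E e => .lete 2 (anfC E) (.letp x y (.var 2) (anf e))
  | .lete x E e => .lete x (anfC E) (anf e)
  | .sendL E e => .lete 0 (anfC E) (anf (.send (.var 0) e))
  | .sendR v E => .lete 1 (anfC E) (.send (anf v) (.var 1))
  | .recv E => .lete 1 (anfC E) (.recv (.var 1))
  | .accept E => .lete 0 (anfC E) (.accept (.var 0))
  | .request E => .lete 0 (anfC E) (.request (.var 0))

/-! ## LFST-ANF fragment -/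

def isANF : Exp → Bool
  | .var _ => true
  | .unit => true
  | .lam _ e => isANF e
  | .app a b => isValue a && isValue b && isANF a && isANF b
  | .pair a b => isValue a && isValue b && isANF a && isANF b
  | .letp _ _ a b => isValue a && isANF a && isANF b
  | .lete _ a b => isANF a && isANF b
  | .send a b => isValue a && isValue b && isANF a && isANF b
  | .recv a => isValue a && isANF a
  | .accept a => isValue a && isANF a
  | .request a => isValue a && isANF a
  | .newc _ => true
  | .fork e => isANF e
  | .fixE e => isANF e
  | .chan _ _ => true
  | .apn _ => true
  | _ => false

/-- LFST-ANF evaluation contexts: E ::= [] | let x = E in e -/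
inductive ACtx : Type
  | hole
  | lete (x : ℕ) (E : ACtx) (e : Exp)

def fillA : ACtx → Exp → Exp
  | .hole, e => e
  | .lete x E e2, e => .lete x (fillA E e) e2

/-! ## LFST expression reduction -/

inductive EStep : Exp → Exp → Prop
  | beta {x e v} (hv : isValue v = true) :
      EStep (.app (.lam x e) v) (subst v x e)
  | letpair {x y v w e} (hv : isValue v = true) (hw : isValue w = true) :
      EStep (.letp x y (.pair v w) e) (subst w y (subst v x e))
  | letval {x v e} (hv : isValue v = true) :
      EStep (.lete x v e) (subst v x e)
  | rsplitR {α v fs} (hv : isValue (.rcd ((α, v) :: fs)) = true) :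
      EStep (.rsplit (.rcd ((α, v) :: fs)) α) (.pair v (.rcd fs))
  | rconcatR {fs gs} (h1 : isValue (.rcd fs) = true) (h2 : isValue (.rcd gs) = true) :
      EStep (.rconcat (.rcd fs) (.rcd gs)) (.rcd (fs ++ gs))
  | rsplitmanyR {fs : List (ℕ × Exp)} {αs : List ℕ} (hv : isValue (.rcd fs) = true) :
      EStep (.rsplitmany (.rcd fs) αs)
        (.pair (.rcd (fs.filter (fun p => αs.contains p.1)))
               (.rcd (fs.filter (fun p => !(αs.contains p.1)))))
  | ctx {E e e'} (hE : IsECtx E) (h : EStep e e') :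
      EStep (fill E e) (fill E e')

/-! ## LFST configurations and labeled process reduction -/

inductive PLab : Type
  | acceptL | sendL | newL | forkL | eps
  deriving DecidableEq

inductive Conf : Type
  | thread (e : Exp)
  | par (C D : Conf)
  | nuChan (γ : ℕ) (C : Conf)         -- binds both endpoints (γ,+) and (γ,-)
  | nuAp (p : ℕ) (C : Conf)

inductive PStep : Conf → PLab → Conf → Prop
  | expr {e e'} (h : EStep e e') : PStep (.thread e) .eps (.thread e')
  | forkR {E e} (hE : IsECtx E) :
      PStep (.thread (fill E (.fork e))) .forkL
            (.par (.thread (fill E .unit)) (.thread e))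
  | newR {E s p} (hE : IsECtx E) :
      PStep (.thread (fill E (.newc s))) .newL (.nuAp p (.thread (fill E (.apn p))))
  | acceptReq {E F p γ} (hE : IsECtx E) (hF : IsECtx F) :
      PStep (.par (.thread (fill E (.accept (.apn p)))) (.thread (fill F (.request (.apn p)))))
            .acceptL
            (.nuChan γ (.par (.thread (fill E (.chan γ true))) (.thread (fill F (.chan γ false)))))
  | comm {E F γ v} (hE : IsECtx E) (hF : IsECtx F) (hv : isValue v = true) :
      PStep (.nuChan γ (.par (.thread (fill E (.send v (.chan γ true))))
                             (.thread (fill F (.recv (.chan γ false))))))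
            .sendL
            (.nuChan γ (.par (.thread (fill E (.chan γ true)))
                             (.thread (fill F (.pair v (.chan γ false))))))
  | parL {C C' D ℓ} (h : PStep C ℓ C') : PStep (.par C D) ℓ (.par C' D)
  | parR {C D D' ℓ} (h : PStep D ℓ D') : PStep (.par C D) ℓ (.par C D')
  | nuChanC {γ C C' ℓ} (h : PStep C ℓ C') : PStep (.nuChan γ C) ℓ (.nuChan γ C')
  | nuApC {p C C' ℓ} (h : PStep C ℓ C') : PStep (.nuAp p C) ℓ (.nuAp p C')

def anfConf : Conf → Conf
  | .thread e => .thread (anf e)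
  | .par C D => .par (anfConf C) (anfConf D)
  | .nuChan γ C => .nuChan γ (anfConf C)
  | .nuAp p C => .nuAp p (anfConf C)

def isANFConf : Conf → Prop
  | .thread e => isANF e = true
  | .par C D => isANFConf C ∧ isANFConf D
  | .nuChan _ C => isANFConf C
  | .nuAp _ C => isANFConf C

end SessRel
namespace SessRel

/-! ## VGR types -/

inductive VTy : Type
  | unit : VTy
  | chanT (α : ℕ) : VTy                                   -- Chan α
  | ap (S : VTy) : VTy                                    -- [S]
  | arrow (Sig1 : List (ℕ × VTy)) (T1 T2 : VTy) (Sig2 : List (ℕ × VTy)) : VTy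
  | prod (T1 T2 : VTy) : VTy
  | send (D S : VTy) : VTy                                -- !D.S
  | recvT (D S : VTy) : VTy                               -- ?D.S
  | endT : VTy

abbrev CEnv := List (ℕ × VTy)   -- channel environments Σ
abbrev TEnv := List (ℕ × VTy)   -- variable environments Γ

def dualV : VTy → VTy
  | .send d s => .recvT d (dualV s)
  | .recvT d s => .send d (dualV s)
  | t => t

/-- data types D (no channels, no sessions at top level) -/
def IsData : VTy → Prop
  | .unit => True
  | .ap _ => True
  | .arrow _ _ _ _ => True
  | .prod _ _ => True
  | _ => False

def IsSession : VTy → Prop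
  | .send _ _ => True
  | .recvT _ _ => True
  | .endT => True
  | _ => False

/-- polarized channel endpoint names: γ⁺ ↦ 2γ, γ⁻ ↦ 2γ+1 -/
def enc (γ : ℕ) (p : Bool) : ℕ := 2 * γ + (if p then 0 else 1)

/-! ## VGR expressions -/

inductive VExp : Type
  | var (x : ℕ)
  | unitV
  | chanP (γ : ℕ) (p : Bool)        -- γ^±
  | nam (n : ℕ)                     -- access point name
  | lam (x : ℕ) (e : VExp)          -- λ(Σ;x:T).e   (annotations elided)
  | recV (x : ℕ) (v : VExp)         -- rec (x:T) v
  | app (v w : VExp)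
  | pair (v w : VExp)               -- (unrestricted) pairs extension
  | letp (x y : ℕ) (e t : VExp)
  | lete (x : ℕ) (e t : VExp)
  | send (v w : VExp)               -- send v on w
  | recvE (v : VExp)
  | accept (v : VExp)
  | request (v : VExp)
  | newc (S : VTy)
  | fork (t1 t2 : VExp)             -- fork t1 ; t2

def isVValue : VExp → Bool
  | .var _ => true
  | .unitV => true
  | .chanP _ _ => true
  | .nam _ => true
  | .lam _ _ => true
  | .recV _ v => isVValue v
  | .pair v w => isVValue v && isVValue w
  | _ => false

def vsubst (v : VExp) (x : ℕ) : VExp → VExp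
  | .var y => if y = x then v else .var y
  | .unitV => .unitV
  | .chanP g p => .chanP g p
  | .nam n => .nam n
  | .lam y e => if y = x then .lam y e else .lam y (vsubst v x e)
  | .recV y w => if y = x then .recV y w else .recV y (vsubst v x w)
  | .app a b => .app (vsubst v x a) (vsubst v x b)
  | .pair a b => .pair (vsubst v x a) (vsubst v x b)
  | .letp y z a b => .letp y z (vsubst v x a) (if y = x ∨ z = x then b else vsubst v x b)
  | .lete y a b => .lete y (vsubst v x a) (if y = x then b else vsubst v x b)
  | .send a b => .send (vsubst v x a) (vsubst v x b)
  | .recvE a => .recvE (vsubst v x a)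
  | .accept a => .accept (vsubst v x a)
  | .request a => .request (vsubst v x a)
  | .newc S => .newc S
  | .fork a b => .fork (vsubst v x a) (vsubst v x b)

/-! ## Backwards translation ⟪·⟫ : LFST(-ANF) → VGR -/

def backLTy : LTy → VTy
  | .unit => .unit
  | .endt => .endT
  | .ap s => .ap (backLTy s)
  | .arr t1 t2 => .arrow [] (backLTy t1) (backLTy t2) []
  | .lolli t1 t2 => .arrow [] (backLTy t1) (backLTy t2) []
  | .prod t1 t2 => .prod (backLTy t1) (backLTy t2)
  | .send t s => .send (backLTy t) (backLTy s)
  | .recv t s => .recvT (backLTy t) (backLTy s)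
  | .rcd _ => .unit

def back : Exp → VExp
  | .var x => .var x
  | .unit => .unitV
  | .lam x e => .lam x (back e)
  | .app a b => .app (back a) (back b)
  | .pair a b => .pair (back a) (back b)
  | .letp x y a b => .letp x y (back a) (back b)
  | .lete x a b => .lete x (back a) (back b)
  | .send a b => .lete 2 (.send (back a) (back b)) (back b)     -- let z = send ⟪a⟫ on ⟪b⟫ in ⟪b⟫
  | .recv a => .lete 0 (.recvE (back a)) (.pair (.var 0) (back a)) -- let x = receive ⟪a⟫ in (x,⟪a⟫)
  | .accept a => .accept (back a)
  | .request a => .request (back a)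
  | .newc s => .newc (backLTy s)
  | .fork e => .fork (back e) .unitV                            -- fork ⟪e⟫ ; ()
  | .fixE e => .recV 0 (back e)
  | .chan g p => .chanP g p
  | .apn p => .nam p
  | .rcd _ => .unitV
  | .rconcat _ _ => .unitV
  | .rsplit _ _ => .unitV
  | .rsplitmany _ _ => .unitV

/-! ## VGR evaluation contexts, expression and process reduction -/

/-- VGR evaluation contexts E ::= [] | let x = E in t -/
inductive VCtx : Type
  | hole
  | lete (x : ℕ) (E : VCtx) (t : VExp)

def vfill : VCtx → VExp → VExp
  | .hole, e => e
  | .lete x E t, e => .lete x (vfill E e) t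

/-- backwards translation on (ANF) evaluation contexts -/
def backACtx : ACtx → VCtx
  | .hole => .hole
  | .lete x E e => .lete x (backACtx E) (back e)

inductive VELab : Type
  | eps
  | acc (γ : ℕ)               -- accept γ
  | req (γ : ℕ)               -- request γ
  | recvL (γ : ℕ) (p : Bool) (v : VExp)   -- γ^p ? v
  | sendL (γ : ℕ) (p : Bool) (v : VExp)   -- γ^p ! v

inductive VEStep : VExp → VELab → VExp → Prop
  | beta {E x e v} (hE : True) (hv : isVValue v = true) :
      VEStep (vfill E (.app (.lam x e) v)) .eps (vfill E (vsubst v x e))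
  | letv {E x v t} (hv : isVValue v = true) :
      VEStep (vfill E (.lete x v t)) .eps (vfill E (vsubst v x t))
  | letpair {E x y v w t} (hv : isVValue v = true) (hw : isVValue w = true) :
      VEStep (vfill E (.letp x y (.pair v w) t)) .eps (vfill E (vsubst w y (vsubst v x t)))
  | reqR {E n γ} :
      VEStep (vfill E (.request (.nam n))) (.req γ) (vfill E (.chanP γ true))
  | accR {E n γ} :
      VEStep (vfill E (.accept (.nam n))) (.acc γ) (vfill E (.chanP γ false))
  | recvR {E γ p v} (hv : isVValue v = true) :
      VEStep (vfill E (.recvE (.chanP γ p))) (.recvL γ p v) (vfill E v)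
  | sendR {E γ p v} (hv : isVValue v = true) :
      VEStep (vfill E (.send v (.chanP γ p))) (.sendL γ p v) (vfill E .unitV)

inductive VCfg : Type
  | thread (t : VExp)
  | par (C D : VCfg)
  | nuChan (γ : ℕ) (C : VCfg)      -- (νγ) C
  | nuAp (n : ℕ) (C : VCfg)        -- (νn:[S]) C (annotation elided)

inductive VPStep : VCfg → PLab → VCfg → Prop
  | expr {t t'} (h : VEStep t .eps t') : VPStep (.thread t) .eps (.thread t')
  | sync {t1 t1' t2 t2' γ} (h1 : VEStep t1 (.req γ) t1') (h2 : VEStep t2 (.acc γ) t2') :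
      VPStep (.par (.thread t1) (.thread t2)) .acceptL
             (.nuChan γ (.par (.thread t1') (.thread t2')))
  | comm {t1 t1' t2 t2' γ p v} (h1 : VEStep t1 (.recvL γ p v) t1')
      (h2 : VEStep t2 (.sendL γ (!p) v) t2') :
      VPStep (.par (.thread t1) (.thread t2)) .sendL (.par (.thread t1') (.thread t2'))
  | newR {E S n} :
      VPStep (.thread (vfill E (.newc S))) .newL (.nuAp n (.thread (vfill E (.nam n))))
  | forkR {E t1 t2} :
      VPStep (.thread (vfill E (.fork t1 t2))) .forkL (.par (.thread t1) (.thread (vfill E t2)))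
  | parL {C C' D ℓ} (h : VPStep C ℓ C') : VPStep (.par C D) ℓ (.par C' D)
  | parR {C D D' ℓ} (h : VPStep D ℓ D') : VPStep (.par C D) ℓ (.par C D')
  | nuChanC {γ C C' ℓ} (h : VPStep C ℓ C') : VPStep (.nuChan γ C) ℓ (.nuChan γ C')
  | nuApC {n C C' ℓ} (h : VPStep C ℓ C') : VPStep (.nuAp n C) ℓ (.nuAp n C')

def backC : Conf → VCfg
  | .thread e => .thread (back e)
  | .par C D => .par (backC C) (backC D)
  | .nuChan γ C => .nuChan γ (backC C)
  | .nuAp p C => .nuAp p (backC C)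

end SessRel
namespace SessRel

/-! ## LFST(-rec) typing -/

abbrev Key := ℕ ⊕ (ℕ × Bool)      -- variables or polarized channel endpoints
abbrev LEnv := List (Key × LTy)

/-- unrestricted LFST types -/
def un : LTy → Prop
  | .unit => True
  | .endt => True
  | .ap _ => True
  | .arr _ _ => True
  | .prod t1 t2 => un t1 ∧ un t2
  | .rcd [] => True
  | .rcd ((_, t) :: r) => un t ∧ un (.rcd r)
  | _ => False

def unEnv (Γ : LEnv) : Prop := ∀ p ∈ Γ, un p.2

/-- linear environment splitting (generic over the type of types) -/
inductive SplitEnv {τ : Type} (unP : τ → Prop) : List (Key × τ) → List (Key × τ) → List (Key × τ) → Prop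
  | nil : SplitEnv unP [] [] []
  | left {Γ Γ1 Γ2 k t} : SplitEnv unP Γ Γ1 Γ2 → SplitEnv unP ((k,t)::Γ) ((k,t)::Γ1) Γ2
  | right {Γ Γ1 Γ2 k t} : SplitEnv unP Γ Γ1 Γ2 → SplitEnv unP ((k,t)::Γ) Γ1 ((k,t)::Γ2)
  | both {Γ Γ1 Γ2 k t} (h : unP t) : SplitEnv unP Γ Γ1 Γ2 →
      SplitEnv unP ((k,t)::Γ) ((k,t)::Γ1) ((k,t)::Γ2)

abbrev LSplit := SplitEnv un

def rowKeys (r : List (ℕ × LTy)) : List ℕ := r.map Prod.fst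

/-- LFST(-rec) expression typing Γ ⊢ e : t -/
inductive LTyping : LEnv → Exp → LTy → Prop
  | unit {Γ} (h : unEnv Γ) : LTyping Γ .unit .unit
  | var {Γ x t} (h : unEnv Γ) : LTyping ((Sum.inl x, t) :: Γ) (.var x) t
  | chanV {Γ γ p t} (h : unEnv Γ) : LTyping ((Sum.inr (γ, p), t) :: Γ) (.chan γ p) t
  | apV {Γ n s} (h : unEnv Γ) : LTyping ((Sum.inl n, .ap s) :: Γ) (.apn n) (.ap s)
  | lamU {Γ x e t1 t2} (h : unEnv Γ) (hb : LTyping ((Sum.inl x, t1) :: Γ) e t2) :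
      LTyping Γ (.lam x e) (.arr t1 t2)
  | lamL {Γ x e t1 t2} (hb : LTyping ((Sum.inl x, t1) :: Γ) e t2) :
      LTyping Γ (.lam x e) (.lolli t1 t2)
  | appU {Γ Γ1 Γ2 e1 e2 t1 t2} (hs : LSplit Γ Γ1 Γ2)
      (h1 : LTyping Γ1 e1 (.arr t1 t2)) (h2 : LTyping Γ2 e2 t1) :
      LTyping Γ (.app e1 e2) t2
  | appL {Γ Γ1 Γ2 e1 e2 t1 t2} (hs : LSplit Γ Γ1 Γ2)
      (h1 : LTyping Γ1 e1 (.lolli t1 t2)) (h2 : LTyping Γ2 e2 t1) :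
      LTyping Γ (.app e1 e2) t2
  | pairI {Γ Γ1 Γ2 e1 e2 t1 t2} (hs : LSplit Γ Γ1 Γ2)
      (h1 : LTyping Γ1 e1 t1) (h2 : LTyping Γ2 e2 t2) :
      LTyping Γ (.pair e1 e2) (.prod t1 t2)
  | pairE {Γ Γ1 Γ2 x y e1 e2 t1 t2 t} (hs : LSplit Γ Γ1 Γ2)
      (h1 : LTyping Γ1 e1 (.prod t1 t2))
      (h2 : LTyping ((Sum.inl x, t1) :: (Sum.inl y, t2) :: Γ2) e2 t) :
      LTyping Γ (.letp x y e1 e2) t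
  | letI {Γ Γ1 Γ2 x e1 e2 t1 t2} (hs : LSplit Γ Γ1 Γ2)
      (h1 : LTyping Γ1 e1 t1) (h2 : LTyping ((Sum.inl x, t1) :: Γ2) e2 t2) :
      LTyping Γ (.lete x e1 e2) t2
  | sendT {Γ Γ1 Γ2 e1 e2 t s} (hs : LSplit Γ Γ1 Γ2)
      (h1 : LTyping Γ1 e1 t) (h2 : LTyping Γ2 e2 (.send t s)) :
      LTyping Γ (.send e1 e2) s
  | recvT {Γ e t s} (h : LTyping Γ e (.recv t s)) :
      LTyping Γ (.recv e) (.prod t s)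
  | forkT {Γ e t} (h : LTyping Γ e t) : LTyping Γ (.fork e) .unit
  | newT {Γ s} (h : unEnv Γ) : LTyping Γ (.newc s) (.ap s)
  | acceptT {Γ e s} (h : LTyping Γ e (.ap s)) : LTyping Γ (.accept e) s
  | requestT {Γ e s} (h : LTyping Γ e (.ap s)) : LTyping Γ (.request e) (dualL s)
  | fixT {Γ e t} (h : LTyping Γ e (.arr t t)) : LTyping Γ (.fixE e) t
  -- record rules (LFST-rec)
  | emp {Γ} (h : unEnv Γ) : LTyping Γ (.rcd []) (.rcd [])
  | single {Γ α e t} (h : LTyping Γ e t) : LTyping Γ (.rcd [(α, e)]) (.rcd [(α, t)])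
  | concat {Γ Γ1 Γ2 e1 e2 r1 r2} (hs : LSplit Γ Γ1 Γ2)
      (h1 : LTyping Γ1 e1 (.rcd r1)) (h2 : LTyping Γ2 e2 (.rcd r2))
      (hd : ∀ a ∈ rowKeys r1, a ∉ rowKeys r2) :
      LTyping Γ (.rconcat e1 e2) (.rcd (r1 ++ r2))
  | field {Γ e α t r} (h : LTyping Γ e (.rcd ((α, t) :: r))) :
      LTyping Γ (.rsplit e α) (.prod t (.rcd r))
  | splitrecord {Γ e r1 r2} (h : LTyping Γ e (.rcd (r1 ++ r2)))
      (hd : ∀ a ∈ rowKeys r1, a ∉ rowKeys r2) :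
      LTyping Γ (.rsplitmany e (rowKeys r1)) (.prod (.rcd r1) (.rcd r2))

/-- LFST configuration typing Γ ⊢ C -/
inductive LConf : LEnv → Conf → Prop
  | thread {Γ e t} (h : LTyping Γ e t) (hu : un t) : LConf Γ (.thread e)
  | par {Γ Γ1 Γ2 C D} (hs : LSplit Γ Γ1 Γ2) (h1 : LConf Γ1 C) (h2 : LConf Γ2 D) :
      LConf Γ (.par C D)
  | nuChan {Γ γ s C}
      (h : LConf ((Sum.inr (γ, true), s) :: (Sum.inr (γ, false), dualL s) :: Γ) C) :
      LConf Γ (.nuChan γ C)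
  | nuAp {Γ p s C} (h : LConf ((Sum.inl p, .ap s) :: Γ) C) : LConf Γ (.nuAp p C)

/-! ## VGR typing -/

mutual
/-- VGR value typing Γ ⊢ v : T -/
inductive VVal : TEnv → VExp → VTy → Prop
  | const {Γ} : VVal Γ .unitV .unit
  | chan {Γ γ p} : VVal Γ (.chanP γ p) (.chanT (enc γ p))
  | varT {Γ x T} (h : (x, T) ∈ Γ) : VVal Γ (.var x) T
  | abs {Γ x e Sg1 T1 T2 Sg2}
      (h : VExpr ((x, T1) :: Γ) Sg1 e [] T2 Sg2) :
      VVal Γ (.lam x e) (.arrow Sg1 T1 T2 Sg2)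
  | recT {Γ x v T} (h : VVal ((x, T) :: Γ) v T) : VVal Γ (.recV x v) T
  | pairI {Γ v w T1 T2} (h1 : VVal Γ v T1) (h2 : VVal Γ w T2) :
      VVal Γ (.pair v w) (.prod T1 T2)

/-- VGR expression typing Γ; Σ ⊢ e : Σ₁; T; Σ₂ -/
inductive VExpr : TEnv → CEnv → VExp → CEnv → VTy → CEnv → Prop
  | val {Γ Sg v T} (h : VVal Γ v T) : VExpr Γ Sg v Sg T []
  | appT {Γ Sg Sg1 Sg2 v v' T1 T2}
      (h1 : VVal Γ v (.arrow Sg1 T1 T2 Sg2)) (h2 : VVal Γ v' T1) :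
      VExpr Γ (Sg1 ++ Sg) (.app v v') Sg T2 Sg2
  | sendD {Γ Sg v v' D S α} (hD : IsData D)
      (h1 : VVal Γ v D) (h2 : VVal Γ v' (.chanT α)) :
      VExpr Γ ((α, .send D S) :: Sg) (.send v v') Sg .unit [(α, S)]
  | sendS {Γ Sg v v' S' S α β}
      (h1 : VVal Γ v (.chanT β)) (h2 : VVal Γ v' (.chanT α)) :
      VExpr Γ ((β, S') :: (α, .send S' S) :: Sg) (.send v v') Sg .unit [(α, S)]
  | receiveD {Γ Sg v D S α} (hD : IsData D) (h : VVal Γ v (.chanT α)) :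
      VExpr Γ ((α, .recvT D S) :: Sg) (.recvE v) Sg D [(α, S)]
  | receiveS {Γ Sg v S' S α d} (h : VVal Γ v (.chanT α)) :
      VExpr Γ ((α, .recvT S' S) :: Sg) (.recvE v) Sg (.chanT d) [(d, S'), (α, S)]
  | acceptT {Γ Sg v S α} (h : VVal Γ v (.ap S)) :
      VExpr Γ Sg (.accept v) Sg (.chanT α) [(α, S)]
  | requestT {Γ Sg v S α} (h : VVal Γ v (.ap S)) :
      VExpr Γ Sg (.request v) Sg (.chanT α) [(α, dualV S)]
  | newT {Γ Sg S} : VExpr Γ Sg (.newc S) Sg (.ap S) []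
  | letT {Γ Sg Sg1 Sg1' Sg2 Sg3 x e t T1 T2}
      (h1 : VExpr Γ Sg e Sg1 T1 Sg2)
      (h2 : VExpr ((x, T1) :: Γ) (Sg2 ++ Sg1) t Sg1' T2 Sg3) :
      VExpr Γ Sg (.lete x e t) Sg1' T2 Sg3
  | letpT {Γ Sg Sg1 Sg1' Sg2 Sg3 x y e t T1 T2 T}
      (h1 : VExpr Γ Sg e Sg1 (.prod T1 T2) Sg2)
      (h2 : VExpr ((x, T1) :: (y, T2) :: Γ) (Sg2 ++ Sg1) t Sg1' T Sg3) :
      VExpr Γ Sg (.letp x y e t) Sg1' T Sg3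
  | forkT {Γ Sg Sg1 Sg2 Sg3 t1 t2 T T'}
      (h1 : VExpr Γ Sg t1 Sg1 T [])
      (h2 : VExpr Γ Sg1 t2 Sg2 T' Sg3) :
      VExpr Γ Sg (.fork t1 t2) Sg2 T' Sg3
end

/-- VGR configuration typing Γ; Σ ⊢ C : Σ₁ -/
inductive VCfgT : TEnv → CEnv → VCfg → CEnv → Prop
  | thread {Γ Sg Sg1 t T} (h : VExpr Γ Sg t Sg1 T []) : VCfgT Γ Sg (.thread t) Sg1
  | par {Γ Sg Sg1 Sg2 C D} (h1 : VCfgT Γ Sg C Sg1) (h2 : VCfgT Γ Sg1 D Sg2) :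
      VCfgT Γ Sg (.par C D) Sg2
  | nuAp {Γ Sg Sg1 n S C} (h : VCfgT ((n, .ap S) :: Γ) Sg C Sg1) :
      VCfgT Γ Sg (.nuAp n C) Sg1
  | nuChan {Γ Sg Sg1 γ S C}
      (h : VCfgT Γ ((enc γ true, S) :: (enc γ false, dualV S) :: Sg) C Sg1) :
      VCfgT Γ Sg (.nuChan γ C) Sg1

end SessRel
namespace SessRel

/-! ## Forward translation VGR → LFST-rec -/

mutual
/-- type translation ⟦T⟧ -/
def transTy : VTy → LTy
  | .unit => .unit
  | .chanT _ => .unit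
  | .ap S => .ap (transTy S)
  | .arrow Sg1 T1 T2 Sg2 =>
      .arr (transTy T1) (.arr (.rcd (transEnvL Sg1)) (.prod (transTy T2) (.rcd (transEnvL Sg2))))
  | .prod T1 T2 => .prod (transTy T1) (transTy T2)
  | .send D S => .send (transTy D) (transTy S)
  | .recvT D S => .recv (transTy D) (transTy S)
  | .endT => .endt

/-- environment/row translation ⟦Σ⟧ -/
def transEnvL : List (ℕ × VTy) → List (ℕ × LTy)
  | [] => []
  | (a, T) :: r => (a, transTy T) :: transEnvL r
end

def transTEnv (Γ : TEnv) : LEnv := Γ.map (fun p => (Sum.inl p.1, transTy p.2))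

/-- channel environment as an LFST typing environment (channel endpoints as keys) -/
def chanLEnv (Sg : CEnv) : LEnv :=
  Sg.map (fun p => (Sum.inr (p.1 / 2, decide (p.1 % 2 = 0)), transTy p.2))

/-- Σ \ Σ₁ : channels of Σ not in Σ₁ -/
def envDiff (Sg Sg1 : CEnv) : CEnv := Sg.filter (fun p => !(Sg1.any (fun q => q.1 == p.1)))

/-- the channel value named by α (decoding the polarity) -/
def chanOf (α : ℕ) : Exp := .chan (α / 2) (decide (α % 2 = 0))

/-- the initial record {γ̄ = γ̄} for a thread -/
def initRcd (Sg : CEnv) : Exp := .rcd (Sg.map (fun p => (p.1, chanOf p.1)))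

/-- the state variable σ -/
def sv : ℕ := 100

mutual
/-- derivation-directed translation of VGR value typings: Γ ⊢ v : T ⟿ ⟦v⟧ -/
inductive TrVal : TEnv → VExp → VTy → Exp → Prop
  | const {Γ} : TrVal Γ .unitV .unit .unit
  | chan {Γ γ p} : TrVal Γ (.chanP γ p) (.chanT (enc γ p)) .unit
  | varT {Γ x T} (h : (x, T) ∈ Γ) : TrVal Γ (.var x) T (.var x)
  | abs {Γ x e Sg1 T1 T2 Sg2 e'}
      (h : TrExp ((x, T1) :: Γ) Sg1 e [] T2 Sg2 e') :
      TrVal Γ (.lam x e) (.arrow Sg1 T1 T2 Sg2) (.lam x (.lam sv e'))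
  | recT {Γ x v T e} (h : TrVal ((x, T) :: Γ) v T e) :
      TrVal Γ (.recV x v) T (.fixE (.lam x e))

/-- derivation-directed translation of VGR expression typings:
    Γ; Σ ⊢ e : Σ₁; T; Σ₂ ⟿ ⟦e⟧_σ (an expression with free state variable σ) -/
inductive TrExp : TEnv → CEnv → VExp → CEnv → VTy → CEnv → Exp → Prop
  | val {Γ Sg v T e} (h : TrVal Γ v T e) :
      TrExp Γ Sg v Sg T [] (.pair e (.var sv))
  | appT {Γ Sg Sg1 Sg2 v v' T1 T2 e e'}
      (h1 : TrVal Γ v (.arrow Sg1 T1 T2 Sg2) e) (h2 : TrVal Γ v' T1 e') :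
      TrExp Γ (Sg1 ++ Sg) (.app v v') Sg T2 Sg2 (.app (.app e e') (.var sv))
  | receiveD {Γ Sg v D S α e} (hD : IsData D) (h : TrVal Γ v (.chanT α) e) :
      TrExp Γ ((α, .recvT D S) :: Sg) (.recvE v) Sg D [(α, S)]
        (.letp 101 sv (.rsplit (.var sv) α)
          (.letp 102 101 (.recv (.var 101))
            (.pair (.var 102) (.rconcat (.var sv) (.rcd [(α, .var 101)])))))
  | receiveS {Γ Sg v S' S α d e} (h : TrVal Γ v (.chanT α) e) :
      TrExp Γ ((α, .recvT S' S) :: Sg) (.recvE v) Sg (.chanT d) [(d, S'), (α, S)]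
        (.letp 101 sv (.rsplit (.var sv) α)
          (.letp 102 101 (.recv (.var 101))
            (.pair .unit (.rconcat (.var sv)
              (.rconcat (.rcd [(d, .var 102)]) (.rcd [(α, .var 101)]))))))
  | sendD {Γ Sg v v' D S α e e'} (hD : IsData D)
      (h1 : TrVal Γ v D e) (h2 : TrVal Γ v' (.chanT α) e') :
      TrExp Γ ((α, .send D S) :: Sg) (.send v v') Sg .unit [(α, S)]
        (.letp 101 sv (.rsplit (.var sv) α)
          (.lete 101 (.send e (.var 101))
            (.pair .unit (.rconcat (.var sv) (.rcd [(α, .var 101)])))))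
  | sendS {Γ Sg v v' S' S α β e e'}
      (h1 : TrVal Γ v (.chanT β) e) (h2 : TrVal Γ v' (.chanT α) e') :
      TrExp Γ ((β, S') :: (α, .send S' S) :: Sg) (.send v v') Sg .unit [(α, S)]
        (.letp 101 sv (.rsplit (.var sv) α)
          (.letp 103 sv (.rsplit (.var sv) β)
            (.lete 101 (.send (.var 103) (.var 101))
              (.pair .unit (.rconcat (.var sv) (.rcd [(α, .var 101)]))))))
  | acceptT {Γ Sg v S α e} (h : TrVal Γ v (.ap S) e) :
      TrExp Γ Sg (.accept v) Sg (.chanT α) [(α, S)]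
        (.lete 101 (.accept e) (.pair .unit (.rconcat (.var sv) (.rcd [(α, .var 101)]))))
  | requestT {Γ Sg v S α e} (h : TrVal Γ v (.ap S) e) :
      TrExp Γ Sg (.request v) Sg (.chanT α) [(α, dualV S)]
        (.lete 101 (.request e) (.pair .unit (.rconcat (.var sv) (.rcd [(α, .var 101)]))))
  | newT {Γ Sg S} :
      TrExp Γ Sg (.newc S) Sg (.ap S) [] (.pair (.newc (transTy S)) (.var sv))
  | letT {Γ Sg Sg1 Sg1' Sg2 Sg3 x e t T1 T2 e' t'}
      (h1 : TrExp Γ Sg e Sg1 T1 Sg2 e')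
      (h2 : TrExp ((x, T1) :: Γ) (Sg2 ++ Sg1) t Sg1' T2 Sg3 t') :
      TrExp Γ Sg (.lete x e t) Sg1' T2 Sg3 (.letp x sv e' t')
  | forkT {Γ Sg Sg1 Sg2 Sg3 t1 t2 T T' e1 e2}
      (h1 : TrExp Γ Sg t1 Sg1 T [] e1)
      (h2 : TrExp Γ Sg1 t2 Sg2 T' Sg3 e2) :
      TrExp Γ Sg (.fork t1 t2) Sg2 T' Sg3
        (.letp 103 104 (.rsplitmany (.var sv) ((envDiff Sg Sg1).map Prod.fst))
          (.lete 105 (.fork (.lete sv (.var 103) e1))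
            (.lete sv (.var 104) e2)))

end

/-- derivation-directed translation of VGR configuration typings -/
inductive TrCfg : TEnv → CEnv → VCfg → CEnv → Conf → Prop
  | thread {Γ Sg Sg1 t T e'}
      (h : TrExp Γ Sg t Sg1 T [] e') :
      TrCfg Γ Sg (.thread t) Sg1 (.thread (.lete sv (initRcd (envDiff Sg Sg1)) e'))
  | par {Γ Sg Sg1 Sg2 C D C' D'}
      (h1 : TrCfg Γ Sg C Sg1 C') (h2 : TrCfg Γ Sg1 D Sg2 D') :
      TrCfg Γ Sg (.par C D) Sg2 (.par C' D')
  | nuAp {Γ Sg Sg1 n S C C'}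
      (h : TrCfg ((n, .ap S) :: Γ) Sg C Sg1 C') :
      TrCfg Γ Sg (.nuAp n C) Sg1 (.nuAp n C')
  | nuChan {Γ Sg Sg1 γ S C C'}
      (h : TrCfg Γ ((enc γ true, S) :: (enc γ false, dualV S) :: Sg) C Sg1 C') :
      TrCfg Γ Sg (.nuChan γ C) Sg1 (.nuChan γ C')

/-! ## Multi-step helpers -/

def EpsStepsL (C D : Conf) : Prop :=
  Relation.ReflTransGen (fun a b => PStep a .eps b) C D

/-- one or more LFST steps whose labels compose to ℓ -/
def MultiLab (C : Conf) (ℓ : PLab) (D : Conf) : Prop :=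
  (ℓ = .eps ∧ Relation.TransGen (fun a b => PStep a .eps b) C D) ∨
  (∃ C1 C2, EpsStepsL C C1 ∧ PStep C1 ℓ C2 ∧ EpsStepsL C2 D)

def EpsStepsV (C D : VCfg) : Prop :=
  Relation.ReflTransGen (fun a b => VPStep a .eps b) C D

/-! ## LFST-EFF: effect typing for LFST -/

inductive ETy : Type
  | unit : ETy
  | ap (s : ETy) : ETy
  | tagged (α : ℕ) (s : ETy) : ETy                 -- α⟨s⟩
  | arr (t1 : ETy) (Si So : List (ℕ × ETy)) (t2 : ETy) : ETy
  | lolli (t1 : ETy) (Si So : List (ℕ × ETy)) (t2 : ETy) : ETy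
  | prod (t1 t2 : ETy) : ETy
  | send (d s : ETy) : ETy
  | recv (d s : ETy) : ETy
  | endt : ETy

abbrev EffEnv := List (ℕ × ETy)
abbrev EEnv := List (Key × ETy)

def dualE : ETy → ETy
  | .send d s => .recv d (dualE s)
  | .recv d s => .send d (dualE s)
  | t => t

def unETy : ETy → Prop
  | .unit => True
  | .endt => True
  | .ap _ => True
  | .arr _ _ _ _ => True
  | .prod t1 t2 => unETy t1 ∧ unETy t2
  | _ => False

def unEEnv (Γ : EEnv) : Prop := ∀ p ∈ Γ, unETy p.2

abbrev ESplit := SplitEnv unETy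

mutual
/-- erasure of identity tags and effect annotations -/
def erase : ETy → LTy
  | .unit => .unit
  | .ap s => .ap (erase s)
  | .tagged _ s => erase s
  | .arr t1 _ _ t2 => .arr (erase t1) (erase t2)
  | .lolli t1 _ _ t2 => .lolli (erase t1) (erase t2)
  | .prod t1 t2 => .prod (erase t1) (erase t2)
  | .send d s => .send (erase d) (erase s)
  | .recv d s => .recv (erase d) (erase s)
  | .endt => .endt

def eraseL : List (ℕ × ETy) → List (ℕ × LTy)
  | [] => []
  | (a, t) :: r => (a, erase t) :: eraseL r
end

def eraseEnv (Γ : EEnv) : LEnv := Γ.map (fun p => (p.1, erase p.2))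

/-- LFST-EFF typing Γ ⊢' e : t / Σᵢ ↦ Σₒ -/
inductive ETyping : EEnv → Exp → ETy → EffEnv → EffEnv → Prop
  | unit {Γ Sg} (h : unEEnv Γ) : ETyping Γ .unit .unit Sg Sg
  | varT {Γ x t Sg} (h : unEEnv Γ) : ETyping ((Sum.inl x, t) :: Γ) (.var x) t Sg Sg
  | chanV {Γ γ p t Sg} (h : unEEnv Γ) : ETyping ((Sum.inr (γ, p), t) :: Γ) (.chan γ p) t Sg Sg
  | apV {Γ n s Sg} (h : unEEnv Γ) : ETyping ((Sum.inl n, .ap s) :: Γ) (.apn n) (.ap s) Sg Sg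
  | lamU {Γ x e t1 t2 Sg0 Sg1 Sg} (h : unEEnv Γ)
      (hb : ETyping ((Sum.inl x, t1) :: Γ) e t2 Sg0 Sg1) :
      ETyping Γ (.lam x e) (.arr t1 Sg0 Sg1 t2) Sg Sg
  | lamL {Γ x e t1 t2 Sg0 Sg1 Sg}
      (hb : ETyping ((Sum.inl x, t1) :: Γ) e t2 Sg0 Sg1) :
      ETyping Γ (.lam x e) (.lolli t1 Sg0 Sg1 t2) Sg Sg
  | appU {Γ Γ1 Γ2 e1 e2 t1 t2 Sg0 Sg1 Sg2 Sg2' Sg3} (hs : ESplit Γ Γ1 Γ2)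
      (h1 : ETyping Γ1 e1 (.arr t2 Sg2 Sg3 t1) Sg0 Sg1)
      (h2 : ETyping Γ2 e2 t2 Sg1 (Sg2 ++ Sg2')) :
      ETyping Γ (.app e1 e2) t1 Sg0 (Sg3 ++ Sg2')
  | appL {Γ Γ1 Γ2 e1 e2 t1 t2 Sg0 Sg1 Sg2 Sg2' Sg3} (hs : ESplit Γ Γ1 Γ2)
      (h1 : ETyping Γ1 e1 (.lolli t2 Sg2 Sg3 t1) Sg0 Sg1)
      (h2 : ETyping Γ2 e2 t2 Sg1 (Sg2 ++ Sg2')) :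
      ETyping Γ (.app e1 e2) t1 Sg0 (Sg3 ++ Sg2')
  | pairI {Γ Γ1 Γ2 e1 e2 t1 t2 Sg Sg' Sg''} (hs : ESplit Γ Γ1 Γ2)
      (h1 : ETyping Γ1 e1 t1 Sg Sg') (h2 : ETyping Γ2 e2 t2 Sg' Sg'') :
      ETyping Γ (.pair e1 e2) (.prod t1 t2) Sg Sg''
  | pairE {Γ Γ1 Γ2 x y e1 e2 t1 t2 t Sg Sg' Sg''} (hs : ESplit Γ Γ1 Γ2)
      (h1 : ETyping Γ1 e1 (.prod t1 t2) Sg Sg')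
      (h2 : ETyping ((Sum.inl x, t1) :: (Sum.inl y, t2) :: Γ2) e2 t Sg' Sg'') :
      ETyping Γ (.letp x y e1 e2) t Sg Sg''
  | letT {Γ Γ1 Γ2 x e1 e2 t1 t2 Sg Sg' Sg''} (hs : ESplit Γ Γ1 Γ2)
      (h1 : ETyping Γ1 e1 t1 Sg Sg')
      (h2 : ETyping ((Sum.inl x, t1) :: Γ2) e2 t2 Sg' Sg'') :
      ETyping Γ (.lete x e1 e2) t2 Sg Sg''
  | forkT {Γ e t Sg} (h : ETyping Γ e t Sg []) :
      ETyping Γ (.fork e) .unit Sg []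
  | sendD {Γ Γ1 Γ2 e1 e2 d s α Sg Sg' Sg''} (hs : ESplit Γ Γ1 Γ2)
      (h1 : ETyping Γ1 e1 d Sg Sg')
      (h2 : ETyping Γ2 e2 (.tagged α (.send d s)) Sg' ((α, .send d s) :: Sg'')) :
      ETyping Γ (.send e1 e2) (.tagged α s) Sg ((α, s) :: Sg'')
  | sendS {Γ Γ1 Γ2 e1 e2 s' s α β Sg Sg' Sg''} (hs : ESplit Γ Γ1 Γ2)
      (h1 : ETyping Γ1 e1 (.tagged β s') Sg Sg')
      (h2 : ETyping Γ2 e2 (.tagged α (.send (.tagged β s') s)) Sg'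
              ((β, s') :: (α, .send (.tagged β s') s) :: Sg'')) :
      ETyping Γ (.send e1 e2) (.tagged α s) Sg ((α, s) :: Sg'')
  | recvD {Γ e d s α Sg Sg'} (h : ETyping Γ e (.tagged α (.recv d s)) Sg ((α, .recv d s) :: Sg')) :
      ETyping Γ (.recv e) (.prod d (.tagged α s)) Sg ((α, s) :: Sg')
  | recvS {Γ e s' s α δ Sg Sg'}
      (h : ETyping Γ e (.tagged α (.recv (.tagged δ s') s)) Sg ((α, .recv (.tagged δ s') s) :: Sg')) :
      ETyping Γ (.recv e) (.prod (.tagged δ s') (.tagged α s)) Sg ((δ, s') :: (α, s) :: Sg')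
  | newT {Γ s Sg} (h : unEEnv Γ) : ETyping Γ (.newc (erase s)) (.ap s) Sg Sg
  | acceptT {Γ e s α Sg Sg'} (h : ETyping Γ e (.ap s) Sg Sg') :
      ETyping Γ (.accept e) (.tagged α s) Sg ((α, s) :: Sg')
  | requestT {Γ e s α Sg Sg'} (h : ETyping Γ e (.ap s) Sg Sg') :
      ETyping Γ (.request e) (.tagged α (dualE s)) Sg ((α, dualE s) :: Sg')

/-! ## Backwards type translation LFST-EFF → VGR -/

mutual
def backETy : ETy → VTy
  | .unit => .unit
  | .ap s => .ap (backETy s)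
  | .tagged α _ => .chanT α
  | .arr t1 Si So t2 => .arrow (backEff Si) (backETy t1) (backETy t2) (backEff So)
  | .lolli t1 Si So t2 => .arrow (backEff Si) (backETy t1) (backETy t2) (backEff So)
  | .prod t1 t2 => .prod (backETy t1) (backETy t2)
  | .send d s => .send (backETy d) (backETy s)
  | .recv d s => .recvT (backETy d) (backETy s)
  | .endt => .endT

def backEff : List (ℕ × ETy) → List (ℕ × VTy)
  | [] => []
  | (a, t) :: r => (a, backETy t) :: backEff r
end

/-- translate the variable part of an LFST-EFF environment to a VGR environment -/
def backEEnv (Γ : EEnv) : TEnv :=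
  Γ.filterMap (fun p => match p.1 with
    | Sum.inl x => some (x, backETy p.2)
    | Sum.inr _ => none)

/-- disjointness of channel environments (by channel name) -/
def DisjC (A B : CEnv) : Prop := ∀ p ∈ A, ∀ q ∈ B, p.1 ≠ q.1

end SessRel
namespace SessRel

/-! Induction on the typing derivation. Every `let` introduced by `anf` is typed by the
let rule, the bound operand taking its share of the linear context and the body the rest
together with the fresh variable. A value operand that is left in place while the operand
after it is let-bound is thereby moved behind that operand's effect; this is sound because
a value is typed with an empty effect at any channel environment. -/

namespace SplitEnv

variable {τ : Type} {unP : τ → Prop}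

theorem self_nil : ∀ Γ : List (Key × τ), SplitEnv unP Γ Γ []
  | [] => .nil
  | _ :: Γ => .left (self_nil Γ)

theorem nil_self : ∀ Γ : List (Key × τ), SplitEnv unP Γ [] Γ
  | [] => .nil
  | _ :: Γ => .right (nil_self Γ)

theorem symm {Γ Γ₁ Γ₂ : List (Key × τ)} (h : SplitEnv unP Γ Γ₁ Γ₂) : SplitEnv unP Γ Γ₂ Γ₁ := by
  induction h with
  | nil => exact .nil
  | left _ ih => exact .right ih
  | right _ ih => exact .left ih
  | both hu _ ih => exact .both hu ih

theorem eq_of_nil_right {Γ Γ₁ : List (Key × τ)} (h : SplitEnv unP Γ Γ₁ []) : Γ₁ = Γ := by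
  generalize hΓ₂ : ([] : List (Key × τ)) = Γ₂ at h
  induction h with
  | nil => rfl
  | left _ ih => rw [ih hΓ₂]
  | right _ _ => simp at hΓ₂
  | both _ _ _ => simp at hΓ₂

end SplitEnv

theorem unEEnv_nil : unEEnv [] := nofun

mutual

theorem isValue_anf : ∀ {e : Exp}, isValue e = true → isValue (anf e) = true
  | .var _, _ | .unit, _ | .lam _ _, _ | .chan _ _, _ | .apn _, _ => by simp only [anf, isValue]
  | .pair a b, h => by
    simp only [isValue, Bool.and_eq_true] at h
    simp only [anf, h, if_true, isValue, isValue_anf h.1, isValue_anf h.2, Bool.and_self]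
  | .rcd fs, h => by simpa only [anf] using isValue_anfL h
  | .app _ _, h | .letp _ _ _ _, h | .lete _ _ _, h | .send _ _, h | .recv _, h | .accept _, h
  | .request _, h | .newc _, h | .fork _, h | .fixE _, h | .rconcat _ _, h | .rsplit _ _, h
  | .rsplitmany _ _, h => by simp only [isValue, Bool.false_eq_true] at h

theorem isValue_anfL : ∀ {fs : List (ℕ × Exp)}, isValue (.rcd fs) = true →
    isValue (.rcd (anfL fs)) = true
  | [], _ => by simp only [anfL, isValue]
  | (_, _) :: _, h => by
    simp only [isValue, Bool.and_eq_true] at h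
    simp only [anfL, isValue, isValue_anf h.1, isValue_anfL h.2, Bool.and_self]

end

/-- `va` and `vb` record whether the operands were values before normalization. -/
def letOperand (x : ℕ) (c : Exp → Exp) (va : Bool) (a : Exp) : Exp :=
  if va then c a else .lete x a (c (.var x))

def letOperands (c : Exp → Exp → Exp) (va vb : Bool) (a b : Exp) : Exp :=
  if va then
    if vb then c a b else .lete 1 b (c a (.var 1))
  else
    if vb then .lete 0 a (c (.var 0) b) else .lete 0 a (.lete 1 b (c (.var 0) (.var 1)))

namespace ETyping

theorem pure_of_isValue {Γ : EEnv} {e : Exp} {t : ETy} {Sg Sg' : EffEnv}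
    (h : ETyping Γ e t Sg Sg') (hv : isValue e = true) :
    Sg' = Sg ∧ ∀ Δ, ETyping Γ e t Δ Δ := by
  induction h with
  | unit h => exact ⟨rfl, fun _ => .unit h⟩
  | varT h => exact ⟨rfl, fun _ => .varT h⟩
  | chanV h => exact ⟨rfl, fun _ => .chanV h⟩
  | apV h => exact ⟨rfl, fun _ => .apV h⟩
  | lamU h hb => exact ⟨rfl, fun _ => .lamU h hb⟩
  | lamL hb => exact ⟨rfl, fun _ => .lamL hb⟩
  | pairI hs _ _ ih₁ ih₂ =>
    simp only [isValue, Bool.and_eq_true] at hv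
    obtain ⟨rfl, h₁⟩ := ih₁ hv.1
    obtain ⟨rfl, h₂⟩ := ih₂ hv.2
    exact ⟨rfl, fun Δ => .pairI hs (h₁ Δ) (h₂ Δ)⟩
  | _ => simp only [isValue, Bool.false_eq_true] at hv

theorem letOperand {c : Exp → Exp} {ta t : ETy} {Sout Sfin : EffEnv} {Γ₂ : EEnv}
    (hc : ∀ {Γ Γ₁ a S}, ESplit Γ Γ₁ Γ₂ → ETyping Γ₁ a ta S Sout → ETyping Γ (c a) t S Sfin)
    (x : ℕ) (va : Bool) {Γ Γ₁ : EEnv} {a : Exp} {S : EffEnv}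
    (hs : ESplit Γ Γ₁ Γ₂) (ha : ETyping Γ₁ a ta S Sout) :
    ETyping Γ (SessRel.letOperand x c va a) t S Sfin := by
  cases va
  · exact .letT hs ha (hc (.left (.nil_self Γ₂)) (.varT unEEnv_nil))
  · exact hc hs ha

theorem letOperand_of_unary {c : Exp → Exp} {ta t : ETy} {Sout Sfin : EffEnv}
    (hc : ∀ {Γ a S}, ETyping Γ a ta S Sout → ETyping Γ (c a) t S Sfin)
    (x : ℕ) (va : Bool) {Γ : EEnv} {a : Exp} {S : EffEnv} (ha : ETyping Γ a ta S Sout) :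
    ETyping Γ (SessRel.letOperand x c va a) t S Sfin :=
  letOperand (fun hs h => by obtain rfl := hs.eq_of_nil_right; exact hc h) x va
    (.self_nil Γ) ha

theorem letOperands {c : Exp → Exp → Exp} {ta tb t : ETy} {Sout Sfin : EffEnv}
    (hc : ∀ {Γ Γ₁ Γ₂ a b S S'}, ESplit Γ Γ₁ Γ₂ → ETyping Γ₁ a ta S S' →
      ETyping Γ₂ b tb S' Sout → ETyping Γ (c a b) t S Sfin)
    {va : Bool} (vb : Bool) {Γ Γ₁ Γ₂ : EEnv} {a b : Exp} {S S' : EffEnv}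
    (hs : ESplit Γ Γ₁ Γ₂) (ha : ETyping Γ₁ a ta S S') (hb : ETyping Γ₂ b tb S' Sout)
    (hva : va = true → isValue a = true) :
    ETyping Γ (SessRel.letOperands c va vb a b) t S Sfin := by
  cases va <;> cases vb
  · exact .letT hs ha (.letT (.right (.self_nil Γ₂)) hb
      (hc (.right (.left .nil)) (.varT unEEnv_nil) (.varT unEEnv_nil)))
  · exact .letT hs ha (hc (.left (.nil_self Γ₂)) (.varT unEEnv_nil) hb)
  · obtain ⟨rfl, ha'⟩ := ha.pure_of_isValue (hva rfl)
    exact .letT hs.symm hb (hc (.right (.self_nil Γ₁)) (ha' Sout) (.varT unEEnv_nil))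
  · exact hc hs ha hb

end ETyping

/-- ANF compatibility: A-normalization preserves LFST-EFF typing,
    including the incoming and outgoing channel environments. -/
theorem anf_eff_compatible (Γ : EEnv) (e : Exp) (t : ETy) (Sg Sg' : EffEnv)
    (h : ETyping Γ e t Sg Sg') : ETyping Γ (anf e) t Sg Sg' := by
  induction h with
  | unit h => exact .unit h
  | varT h => exact .varT h
  | chanV h => exact .chanV h
  | apV h => exact .apV h
  | lamU h _ ih => exact .lamU h ih
  | lamL _ ih => exact .lamL ih
  | newT h => exact .newT h
  | letT hs _ _ ih₁ ih₂ => exact .letT hs ih₁ ih₂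
  | forkT _ ih => exact .letT (.self_nil _) (.forkT ih) (.unit (by simp [unEEnv, unETy]))
  | appU hs _ _ ih₁ ih₂ => rw [anf]; exact .letOperands .appU _ hs ih₁ ih₂ isValue_anf
  | appL hs _ _ ih₁ ih₂ => rw [anf]; exact .letOperands .appL _ hs ih₁ ih₂ isValue_anf
  | pairI hs _ _ ih₁ ih₂ => rw [anf]; exact .letOperands .pairI _ hs ih₁ ih₂ isValue_anf
  | sendD hs _ _ ih₁ ih₂ => rw [anf]; exact .letOperands .sendD _ hs ih₁ ih₂ isValue_anf
  | sendS hs _ _ ih₁ ih₂ => rw [anf]; exact .letOperands .sendS _ hs ih₁ ih₂ isValue_anf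
  | pairE hs _ _ ih₁ ih₂ => rw [anf]; exact .letOperand (.pairE · · ih₂) 2 _ hs ih₁
  | recvD _ ih => rw [anf]; exact .letOperand_of_unary .recvD 1 _ ih
  | recvS _ ih => rw [anf]; exact .letOperand_of_unary .recvS 1 _ ih
  | acceptT _ ih => rw [anf]; exact .letOperand_of_unary .acceptT 0 _ ih
  | requestT _ ih => rw [anf]; exact .letOperand_of_unary .requestT 0 _ ih

end SessRel
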